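/- arXiv:1602.04626 — 3 statements merged into one kernel-verified Lean document; each statement's English description precedes it below -/
import Mathlib

section
/- Let u : ℝ³ → ℝ be twice continuously differentiable in a neighbourhood of a point x with Du(x) ≠ 0 and u_{x₁}(x)² + u_{x₃}(x)² ≠ 0. With ν₁ = ν₁(Du(x)) and ν₂ = ν₂(Du(x)) as defined below, the mean curvature operator satisfies |Du(x)| · div(Du/|Du|)(x) = ½ (ν₁+ν₂)ᵀ D²u(x) (ν₁+ν₂) + ½ (ν₁−ν₂)ᵀ D²u(x) (ν₁−ν₂). -/
open scoped Matrix RealInnerProductSpace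

set_option maxHeartbeats 1000000

/-- For `u : ℝ³ → ℝ` twice continuously differentiable near `x`, with
`Du(x) ≠ 0` and `u_{x₁}(x)² + u_{x₃}(x)² ≠ 0`, and `ν₁, ν₂` defined from `Du(x)` as in
\eqref{autovettori}, the mean curvature operator satisfies
`|Du(x)| div(Du/|Du|)(x) = ½(ν₁+ν₂)ᵀD²u(x)(ν₁+ν₂) + ½(ν₁-ν₂)ᵀD²u(x)(ν₁-ν₂)`. -/
theorem stmt_7 (u : EuclideanSpace ℝ (Fin 3) → ℝ) (x : EuclideanSpace ℝ (Fin 3))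
    (hu : ContDiffAt ℝ 2 u x)
    (hgrad : gradient u x ≠ 0)
    (hgrad13 : gradient u x 0 ^ 2 + gradient u x 2 ^ 2 ≠ 0)
    (ν₁ ν₂ : Fin 3 → ℝ)
    (hν₁ : ν₁ = (Real.sqrt (gradient u x 0 ^ 2 + gradient u x 2 ^ 2))⁻¹ •
        ![-gradient u x 2, 0, gradient u x 0])
    (hν₂ : ν₂ = ‖gradient u x‖⁻¹ •
        ![-(gradient u x 0 * gradient u x 1) /
            Real.sqrt (gradient u x 0 ^ 2 + gradient u x 2 ^ 2),
          Real.sqrt (gradient u x 0 ^ 2 + gradient u x 2 ^ 2),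
          -(gradient u x 1 * gradient u x 2) /
            Real.sqrt (gradient u x 0 ^ 2 + gradient u x 2 ^ 2)]) :
    ‖gradient u x‖ *
      (∑ i : Fin 3,
        fderiv ℝ (fun y => ‖gradient u y‖⁻¹ • gradient u y) x (EuclideanSpace.single i 1) i)
    = (1 / 2) * ((ν₁ + ν₂) ⬝ᵥ (Matrix.of (fun i j : Fin 3 =>
          fderiv ℝ (fun y => fderiv ℝ u y (EuclideanSpace.single j 1)) x
            (EuclideanSpace.single i 1))).mulVec (ν₁ + ν₂))
      + (1 / 2) * ((ν₁ - ν₂) ⬝ᵥ (Matrix.of (fun i j : Fin 3 =>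
          fderiv ℝ (fun y => fderiv ℝ u y (EuclideanSpace.single j 1)) x
            (EuclideanSpace.single i 1))).mulVec (ν₁ - ν₂)) := by
  have hfd : ContDiffAt ℝ 1 (fderiv ℝ u) x := hu.fderiv_right (by norm_num)
  have hinner : ∀ y (v : EuclideanSpace ℝ (Fin 3)), ⟪gradient u y, v⟫ = fderiv ℝ u y v := by
    intro y v; rw [gradient]; exact InnerProductSpace.toDual_symm_apply
  have happ : ∀ y (i : Fin 3), gradient u y i = fderiv ℝ u y (EuclideanSpace.single i 1) := by
    intro y i; rw [← hinner, EuclideanSpace.inner_single_right]; simp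
  have hdg : DifferentiableAt ℝ (fun y => gradient u y) x := by
    have h1 : DifferentiableAt ℝ
        (fun y => (fun i => fderiv ℝ u y (EuclideanSpace.single i 1) : Fin 3 → ℝ)) x := by
      rw [differentiableAt_pi]
      intro i
      exact (ContinuousLinearMap.apply ℝ ℝ (EuclideanSpace.single i 1)).differentiableAt.comp x
        (hfd.differentiableAt (by norm_num))
    have h2 : (fun y => gradient u y)
        = fun y => (PiLp.continuousLinearEquiv 2 ℝ (fun _ : Fin 3 => ℝ)).symm
            (fun i => fderiv ℝ u y (EuclideanSpace.single i 1)) := by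
      funext y; ext i; exact happ y i
    rw [h2]
    exact (PiLp.continuousLinearEquiv 2 ℝ (fun _ : Fin 3 => ℝ)).symm.differentiableAt.comp x h1
  set G := fderiv ℝ (fun y => gradient u y) x with hGdef
  have hG : HasFDerivAt (fun y => gradient u y) G x := hdg.hasFDerivAt
  have hH : ∀ i j : Fin 3,
      fderiv ℝ (fun y => fderiv ℝ u y (EuclideanSpace.single j 1)) x (EuclideanSpace.single i 1)
        = G (EuclideanSpace.single i 1) j := by
    intro i j
    have h1 : (fun y => fderiv ℝ u y (EuclideanSpace.single j 1))
        = fun y => EuclideanSpace.proj j (gradient u y) := by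
      funext y; simp [happ y j]
    have h2 : HasFDerivAt (fun y => EuclideanSpace.proj j (gradient u y))
        ((EuclideanSpace.proj j).comp G) x := by
      have h2' := (EuclideanSpace.proj (𝕜 := ℝ) (ι := Fin 3) j).hasFDerivAt.comp x hG
      exact h2'
    rw [h1, h2.fderiv]
    rfl
  set a := gradient u x with hadef
  have hq : HasFDerivAt (fun y => ⟪gradient u y, gradient u y⟫)
      ((fderivInnerCLM ℝ (a, a)).comp (G.prod G)) x := hG.inner ℝ hG
  have hr0 : ‖a‖ ≠ 0 := norm_ne_zero_iff.mpr hgrad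
  have hq0 : ⟪a, a⟫ ≠ 0 := by
    rw [real_inner_self_eq_norm_sq]; exact pow_ne_zero 2 hr0
  have hn : HasFDerivAt (fun y => Real.sqrt ⟪gradient u y, gradient u y⟫)
      ((1 / (2 * Real.sqrt ⟪a, a⟫)) • ((fderivInnerCLM ℝ (a, a)).comp (G.prod G))) x :=
    hq.sqrt hq0
  have hsq : Real.sqrt ⟪a, a⟫ = ‖a‖ := (norm_eq_sqrt_real_inner a).symm
  have hn0 : Real.sqrt ⟪a, a⟫ ≠ 0 := by rw [hsq]; exact hr0
  have hφ : HasFDerivAt (fun y => (Real.sqrt ⟪gradient u y, gradient u y⟫)⁻¹)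
      ((-(Real.sqrt ⟪a, a⟫ ^ 2)⁻¹) • ((1 / (2 * Real.sqrt ⟪a, a⟫)) •
        ((fderivInnerCLM ℝ (a, a)).comp (G.prod G)))) x :=
    (hasDerivAt_inv hn0).comp_hasFDerivAt x hn
  have heq : (fun y => ‖gradient u y‖⁻¹ • gradient u y)
      = fun y => (Real.sqrt ⟪gradient u y, gradient u y⟫)⁻¹ • gradient u y := by
    funext y; rw [norm_eq_sqrt_real_inner]
  have hF : HasFDerivAt (fun y => ‖gradient u y‖⁻¹ • gradient u y)
      ((Real.sqrt ⟪a, a⟫)⁻¹ • G +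
        ((-(Real.sqrt ⟪a, a⟫ ^ 2)⁻¹) • ((1 / (2 * Real.sqrt ⟪a, a⟫)) •
          ((fderivInnerCLM ℝ (a, a)).comp (G.prod G)))).smulRight a) x := by
    rw [heq]
    exact hφ.smul hG
  have hfi : ∀ i : Fin 3, fderiv ℝ (fun y => ‖gradient u y‖⁻¹ • gradient u y) x
      (EuclideanSpace.single i 1) i
      = ‖a‖⁻¹ * G (EuclideanSpace.single i 1) i
        - (‖a‖ ^ 3)⁻¹ * ((∑ j, a j * G (EuclideanSpace.single i 1) j) * a i) := by
    intro i
    rw [hF.fderiv]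
    simp only [ContinuousLinearMap.add_apply, ContinuousLinearMap.smul_apply,
      ContinuousLinearMap.smulRight_apply, ContinuousLinearMap.comp_apply,
      ContinuousLinearMap.prod_apply, fderivInnerCLM_apply, hsq, PiLp.add_apply,
      PiLp.smul_apply, smul_eq_mul, ContinuousLinearMap.neg_apply, neg_smul]
    rw [real_inner_comm (G (EuclideanSpace.single i 1)) a]
    simp only [PiLp.inner_apply, RCLike.inner_apply, starRingEnd_apply, star_trivial]
    have h3 : (∑ j, G (EuclideanSpace.single i 1) j * a j)
        = ∑ j, a j * G (EuclideanSpace.single i 1) j :=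
      Finset.sum_congr rfl fun j _ => mul_comm _ _
    simp only [PiLp.neg_apply, PiLp.smul_apply, smul_eq_mul]
    field_simp
    ring
  -- algebraic facts
  set s := Real.sqrt (a 0 ^ 2 + a 2 ^ 2) with hsdef
  have hss : (0:ℝ) < a 0 ^ 2 + a 2 ^ 2 :=
    lt_of_le_of_ne (by positivity) (Ne.symm hgrad13)
  have hs0 : s ≠ 0 := by
    rw [hsdef]
    exact ne_of_gt (Real.sqrt_pos.mpr hss)
  have hs2 : s ^ 2 = a 0 ^ 2 + a 2 ^ 2 := Real.sq_sqrt hss.le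
  have hr2 : ‖a‖ ^ 2 = a 0 ^ 2 + a 1 ^ 2 + a 2 ^ 2 := by
    rw [← real_inner_self_eq_norm_sq]
    simp only [PiLp.inner_apply, RCLike.inner_apply, starRingEnd_apply, star_trivial,
      Fin.sum_univ_three]
    ring
  -- the completeness relation
  have e00 : ‖a‖ ^ 2 * (ν₁ 0 * ν₁ 0 + ν₂ 0 * ν₂ 0) = ‖a‖ ^ 2 - a 0 * a 0 := by
    simp only [hν₁, hν₂, Pi.smul_apply, Matrix.cons_val_zero, Matrix.cons_val_one,
      Matrix.head_cons, Matrix.cons_val_two, Matrix.tail_cons, smul_eq_mul]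
    field_simp
    linear_combination (a 0^2 - ‖a‖^2) * hs2 - (a 0^2) * hr2
  have e01 : ‖a‖ ^ 2 * (ν₁ 0 * ν₁ 1 + ν₂ 0 * ν₂ 1) = 0 - a 0 * a 1 := by
    simp only [hν₁, hν₂, Pi.smul_apply, Matrix.cons_val_zero, Matrix.cons_val_one,
      Matrix.head_cons, Matrix.cons_val_two, Matrix.tail_cons, smul_eq_mul]
    field_simp
    ring
  have e02 : ‖a‖ ^ 2 * (ν₁ 0 * ν₁ 2 + ν₂ 0 * ν₂ 2) = 0 - a 0 * a 2 := by
    simp only [hν₁, hν₂, Pi.smul_apply, Matrix.cons_val_zero, Matrix.cons_val_one,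
      Matrix.head_cons, Matrix.cons_val_two, Matrix.tail_cons, smul_eq_mul]
    field_simp
    linear_combination (a 0 * a 2) * hs2 - (a 0 * a 2) * hr2
  have e10 : ‖a‖ ^ 2 * (ν₁ 1 * ν₁ 0 + ν₂ 1 * ν₂ 0) = 0 - a 1 * a 0 := by
    simp only [hν₁, hν₂, Pi.smul_apply, Matrix.cons_val_zero, Matrix.cons_val_one,
      Matrix.head_cons, Matrix.cons_val_two, Matrix.tail_cons, smul_eq_mul]
    field_simp
    ring
  have e11 : ‖a‖ ^ 2 * (ν₁ 1 * ν₁ 1 + ν₂ 1 * ν₂ 1) = ‖a‖ ^ 2 - a 1 * a 1 := by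
    simp only [hν₁, hν₂, Pi.smul_apply, Matrix.cons_val_zero, Matrix.cons_val_one,
      Matrix.head_cons, Matrix.cons_val_two, Matrix.tail_cons, smul_eq_mul]
    field_simp
    linear_combination (s^2) * hs2 - (s^2) * hr2
  have e12 : ‖a‖ ^ 2 * (ν₁ 1 * ν₁ 2 + ν₂ 1 * ν₂ 2) = 0 - a 1 * a 2 := by
    simp only [hν₁, hν₂, Pi.smul_apply, Matrix.cons_val_zero, Matrix.cons_val_one,
      Matrix.head_cons, Matrix.cons_val_two, Matrix.tail_cons, smul_eq_mul]
    field_simp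
    ring
  have e20 : ‖a‖ ^ 2 * (ν₁ 2 * ν₁ 0 + ν₂ 2 * ν₂ 0) = 0 - a 2 * a 0 := by
    simp only [hν₁, hν₂, Pi.smul_apply, Matrix.cons_val_zero, Matrix.cons_val_one,
      Matrix.head_cons, Matrix.cons_val_two, Matrix.tail_cons, smul_eq_mul]
    field_simp
    linear_combination (a 0 * a 2) * hs2 - (a 0 * a 2) * hr2
  have e21 : ‖a‖ ^ 2 * (ν₁ 2 * ν₁ 1 + ν₂ 2 * ν₂ 1) = 0 - a 2 * a 1 := by
    simp only [hν₁, hν₂, Pi.smul_apply, Matrix.cons_val_zero, Matrix.cons_val_one,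
      Matrix.head_cons, Matrix.cons_val_two, Matrix.tail_cons, smul_eq_mul]
    field_simp
    ring
  have e22 : ‖a‖ ^ 2 * (ν₁ 2 * ν₁ 2 + ν₂ 2 * ν₂ 2) = ‖a‖ ^ 2 - a 2 * a 2 := by
    simp only [hν₁, hν₂, Pi.smul_apply, Matrix.cons_val_zero, Matrix.cons_val_one,
      Matrix.head_cons, Matrix.cons_val_two, Matrix.tail_cons, smul_eq_mul]
    field_simp
    linear_combination (a 2^2 - ‖a‖^2) * hs2 - (a 2^2) * hr2
  -- assemble
  simp only [Fin.sum_univ_three, hfi, dotProduct, Matrix.mulVec, Matrix.of_apply,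
    Pi.add_apply, Pi.sub_apply, hH]
  apply mul_left_cancel₀ (pow_ne_zero 2 hr0)
  have hL : ∀ z : ℝ, ‖a‖ ^ 2 * (‖a‖ * z) = ‖a‖ ^ 3 * z := by intro z; ring
  rw [hL]
  have hpow : ‖a‖ ^ 3 * (‖a‖⁻¹ * 1) = ‖a‖ ^ 2 := by field_simp
  have h3 : (‖a‖:ℝ) ^ 3 * (‖a‖ ^ 3)⁻¹ = 1 := mul_inv_cancel₀ (pow_ne_zero 3 hr0)
  have h1 : (‖a‖:ℝ) ^ 3 * ‖a‖⁻¹ = ‖a‖ ^ 2 := by field_simp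
  linear_combination
    (- G (EuclideanSpace.single 0 1) 0) * e00 +
    (- G (EuclideanSpace.single 0 1) 1) * e01 +
    (- G (EuclideanSpace.single 0 1) 2) * e02 +
    (- G (EuclideanSpace.single 1 1) 0) * e10 +
    (- G (EuclideanSpace.single 1 1) 1) * e11 +
    (- G (EuclideanSpace.single 1 1) 2) * e12 +
    (- G (EuclideanSpace.single 2 1) 0) * e20 +
    (- G (EuclideanSpace.single 2 1) 1) * e21 +
    (- G (EuclideanSpace.single 2 1) 2) * e22 +
    (G (EuclideanSpace.single 0 1) 0 + G (EuclideanSpace.single 1 1) 1 +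
      G (EuclideanSpace.single 2 1) 2) * h1 +
    (- ((a 0 * G (EuclideanSpace.single 0 1) 0 + a 1 * G (EuclideanSpace.single 0 1) 1 +
          a 2 * G (EuclideanSpace.single 0 1) 2) * a 0
       + (a 0 * G (EuclideanSpace.single 1 1) 0 + a 1 * G (EuclideanSpace.single 1 1) 1 +
          a 2 * G (EuclideanSpace.single 1 1) 2) * a 1
       + (a 0 * G (EuclideanSpace.single 2 1) 0 + a 1 * G (EuclideanSpace.single 2 1) 1 +
          a 2 * G (EuclideanSpace.single 2 1) 2) * a 2)) * h3
end

section
/- Let u : ℝⁿ → ℝ be twice continuously differentiable, let x, b ∈ ℝⁿ, let σ ∈ ℝⁿ with |σ| = 1, and let d ≥ 0. Then lim_{Δt → 0⁺} (1/Δt) · [ ½ u( x + Δt b + √(2 Δt d) σ ) + ½ u( x + Δt b − √(2 Δt d) σ ) − u(x) ] = d · σᵀ D²u(x) σ + b · Du(x), i.e. the two-point semi-Lagrangian scheme is consistent with the operator d σᵀD²u σ + b·Du. -/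
open Filter Asymptotics

theorem my_taylor2 {E : Type*} [NormedAddCommGroup E] [NormedSpace ℝ E]
    (f : E → ℝ) (hf : ContDiff ℝ 2 f) (x : E) :
    (fun h : E => f (x + h) - f x - fderiv ℝ f x h
        - (1/2) * fderiv ℝ (fderiv ℝ f) x h h) =o[nhds 0] fun h => ‖h‖ ^ 2 := by
  set f' := fderiv ℝ f with hf'
  set B := fderiv ℝ f' x with hBdef
  have hdiff : Differentiable ℝ f := hf.differentiable (by norm_num)
  have hf'cd : ContDiff ℝ 1 f' := hf.fderiv_right (by norm_num)
  have hB : HasFDerivAt f' B x := (hf'cd.differentiable (by norm_num) x).hasFDerivAt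
  have hsymm : ∀ v w, B v w = B w v := fun v w =>
    (hf.contDiffAt.isSymmSndFDerivAt (by norm_num)).eq v w
  rw [isLittleO_iff]
  intro ε hε
  have h1 := hB.isLittleO
  rw [isLittleO_iff] at h1
  have h2 := h1 hε
  rw [Metric.eventually_nhds_iff] at h2
  obtain ⟨δ, hδpos, hδ⟩ := h2
  have hball : ∀ᶠ h in nhds (0 : E), ‖h‖ < δ := by
    filter_upwards [Metric.ball_mem_nhds (0 : E) hδpos] with h hh
    exact mem_ball_zero_iff.1 hh
  filter_upwards [hball] with h hh
  -- set up g and its derivative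
  set g : E → ℝ := fun z => f (x + z) - f' x z - (1/2) * B z z with hg
  have key : ∀ z ∈ Metric.closedBall (0 : E) ‖h‖,
      HasFDerivWithinAt g (f' (x + z) - f' x - B z) (Metric.closedBall (0 : E) ‖h‖) z := by
    intro z hz
    have k1 : HasFDerivAt (fun z : E => f (x + z)) (f' (x + z)) z := by
      have := (hdiff (x + z)).hasFDerivAt.comp z ((hasFDerivAt_id z).const_add x)
      exact this
    have k2 : HasFDerivAt (fun z : E => f' x z) (f' x) z := (f' x).hasFDerivAt
    have k3 : HasFDerivAt (fun z : E => (1/2 : ℝ) * B z z) (B z) z := by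
      have h0 : HasFDerivAt (fun z : E => B z z) ((B z).comp (.id ℝ E) + B.flip z) z :=
        (B.hasFDerivAt).clm_apply (hasFDerivAt_id z)
      have h1 := h0.const_mul (1/2 : ℝ)
      refine h1.congr_fderiv ?_
      ext w
      simp [hsymm w z]
      ring
    exact ((k1.sub k2).sub k3).hasFDerivWithinAt
  have bound : ∀ z ∈ Metric.closedBall (0 : E) ‖h‖, ‖f' (x + z) - f' x - B z‖ ≤ ε * ‖h‖ := by
    intro z hz
    rw [Metric.mem_closedBall, dist_zero_right] at hz
    have h3 := hδ (y := x + z) (by simpa [dist_eq_norm] using lt_of_le_of_lt hz hh)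
    simp only [add_sub_cancel_left] at h3
    calc ‖f' (x + z) - f' x - B z‖ ≤ ε * ‖z‖ := h3
      _ ≤ ε * ‖h‖ := by nlinarith [norm_nonneg z, norm_nonneg h]
  have mv := (convex_closedBall (0 : E) ‖h‖).norm_image_sub_le_of_norm_hasFDerivWithin_le
    key bound (Metric.mem_closedBall_self (norm_nonneg h))
    (mem_closedBall_zero_iff.2 le_rfl)
  have hg0 : g 0 = f x := by simp [hg]
  have hgh : g h - g 0 = f (x + h) - f x - f' x h - (1/2) * B h h := by
    rw [hg0]; simp [hg]; ring
  rw [hgh] at mv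
  calc ‖f (x + h) - f x - f' x h - (1/2) * B h h‖ ≤ ε * ‖h‖ * ‖h - 0‖ := mv
    _ ≤ ε * ‖‖h‖ ^ 2‖ := by
        rw [sub_zero, Real.norm_eq_abs, abs_of_nonneg (by positivity : (0:ℝ) ≤ ‖h‖ ^ 2)]
        exact le_of_eq (by ring)

set_option maxHeartbeats 1000000 in


/-- Consistency of the two-point semi-Lagrangian scheme: for `u` twice
continuously differentiable, as `Δt → 0⁺`,
`(1/Δt)[½u(x+Δt b+√(2Δt d)σ) + ½u(x+Δt b-√(2Δt d)σ) - u(x)] → d σᵀD²u(x)σ + b·Du(x)`. -/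
theorem stmt_11 (n : ℕ) (u : EuclideanSpace ℝ (Fin n) → ℝ)
    (hu : ContDiff ℝ 2 u)
    (x b σ : EuclideanSpace ℝ (Fin n)) (hσ : ‖σ‖ = 1) (d : ℝ) (hd : 0 ≤ d) :
    Filter.Tendsto
      (fun Δt : ℝ => (1 / Δt) *
        ((1 / 2) * u (x + Δt • b + Real.sqrt (2 * Δt * d) • σ)
          + (1 / 2) * u (x + Δt • b - Real.sqrt (2 * Δt * d) • σ)
          - u x))
      (nhdsWithin 0 (Set.Ioi 0))
      (nhds (d * fderiv ℝ (fun y => fderiv ℝ u y σ) x σ + inner ℝ b (gradient u x))) := by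
  set L := fderiv ℝ u x with hL
  set B := fderiv ℝ (fderiv ℝ u) x with hBdef
  have hB : HasFDerivAt (fderiv ℝ u) B x :=
    ((hu.fderiv_right (m := 1) (by norm_num)).differentiable (by norm_num) x).hasFDerivAt
  -- identify the target
  have ht1 : fderiv ℝ (fun y => fderiv ℝ u y σ) x σ = B σ σ := by
    have h1 : HasFDerivAt (fun y => fderiv ℝ u y σ)
        ((ContinuousLinearMap.apply ℝ ℝ σ).comp B) x :=
      (ContinuousLinearMap.apply ℝ ℝ σ).hasFDerivAt.comp x hB
    rw [h1.fderiv]; rfl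
  have ht2 : (inner ℝ b (gradient u x) : ℝ) = L b := by
    rw [real_inner_comm, gradient, InnerProductSpace.toDual_symm_apply]
  rw [ht1, ht2]
  -- Taylor remainder
  set R : EuclideanSpace ℝ (Fin n) → ℝ := fun h => u (x + h) - u x - L h - (1/2) * B h h with hRdef
  have hR : R =o[nhds 0] fun h : EuclideanSpace ℝ (Fin n) => ‖h‖ ^ 2 := my_taylor2 u hu x
  set s : ℝ → ℝ := fun t => Real.sqrt (2 * t * d) with hs
  set hp : ℝ → EuclideanSpace ℝ (Fin n) := fun t => t • b + s t • σ with hhp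
  set hm : ℝ → EuclideanSpace ℝ (Fin n) := fun t => t • b - s t • σ with hhm
  have hscont : Tendsto s (nhdsWithin 0 (Set.Ioi 0)) (nhds 0) := by
    have : Continuous s := by
      exact Real.continuous_sqrt.comp (by continuity)
    have h2 := (this.tendsto 0).mono_left (nhdsWithin_le_nhds (s := Set.Ioi (0:ℝ)))
    simpa [hs] using h2
  have htb : Tendsto (fun t : ℝ => t • b) (nhdsWithin 0 (Set.Ioi 0)) (nhds 0) := by
    have : Continuous (fun t : ℝ => t • b) := by continuity
    have h2 := (this.tendsto 0).mono_left (nhdsWithin_le_nhds (s := Set.Ioi (0:ℝ)))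
    simpa using h2
  have htσ : Tendsto (fun t : ℝ => s t • σ) (nhdsWithin 0 (Set.Ioi 0)) (nhds 0) := by
    have := hscont.smul_const σ
    simpa using this
  have hhp0 : Tendsto hp (nhdsWithin 0 (Set.Ioi 0)) (nhds 0) := by
    simpa using htb.add htσ
  have hhm0 : Tendsto hm (nhdsWithin 0 (Set.Ioi 0)) (nhds 0) := by
    simpa using htb.sub htσ
  -- norm bounds
  have hnorm : ∀ (t : ℝ), 0 < t → t < 1 → ∀ v : EuclideanSpace ℝ (Fin n), (v = hp t ∨ v = hm t) →
      ‖v‖ ^ 2 ≤ (2 * ‖b‖ ^ 2 + 4 * d) * t := by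
    intro t ht ht1 v hv
    have hst : s t ^ 2 = 2 * t * d := Real.sq_sqrt (by positivity)
    have hsn : 0 ≤ s t := Real.sqrt_nonneg _
    have hv1 : ‖v‖ ≤ t * ‖b‖ + s t := by
      rcases hv with hv | hv <;> rw [hv]
      · calc ‖t • b + s t • σ‖ ≤ ‖t • b‖ + ‖s t • σ‖ := norm_add_le _ _
          _ = t * ‖b‖ + s t := by
            rw [norm_smul, norm_smul, hσ, Real.norm_eq_abs, Real.norm_eq_abs,
              abs_of_pos ht, abs_of_nonneg hsn, mul_one]
      · calc ‖t • b - s t • σ‖ ≤ ‖t • b‖ + ‖s t • σ‖ := norm_sub_le _ _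
          _ = t * ‖b‖ + s t := by
            rw [norm_smul, norm_smul, hσ, Real.norm_eq_abs, Real.norm_eq_abs,
              abs_of_pos ht, abs_of_nonneg hsn, mul_one]
    have hv0 : 0 ≤ ‖v‖ := norm_nonneg _
    have hb0 : (0:ℝ) ≤ ‖b‖ := norm_nonneg _
    have step1 : ‖v‖ ^ 2 ≤ (t * ‖b‖ + s t) ^ 2 := by
      have h0 : 0 ≤ t * ‖b‖ + s t := by positivity
      nlinarith
    have step2 : (t * ‖b‖ + s t) ^ 2 ≤ 2 * (t * ‖b‖) ^ 2 + 2 * s t ^ 2 := by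
      nlinarith [sq_nonneg (t * ‖b‖ - s t)]
    have step3 : 2 * (t * ‖b‖) ^ 2 ≤ 2 * t * ‖b‖ ^ 2 := by
      have : t ^ 2 ≤ t := by nlinarith
      nlinarith [sq_nonneg ‖b‖]
    have step4 : 2 * s t ^ 2 = 4 * t * d := by rw [hst]; ring
    linarith
  -- little-o composition
  have key : ∀ (w : ℝ → EuclideanSpace ℝ (Fin n)), Tendsto w (nhdsWithin 0 (Set.Ioi 0)) (nhds 0) →
      (∀ t, 0 < t → t < 1 → (w t = hp t ∨ w t = hm t)) →
      Tendsto (fun t => R (w t) / t) (nhdsWithin 0 (Set.Ioi 0)) (nhds 0) := by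
    intro w hw hwc
    have h1 : (fun t => R (w t)) =o[nhdsWithin 0 (Set.Ioi 0)] fun t => ‖w t‖ ^ 2 :=
      hR.comp_tendsto hw
    have h2 : (fun t : ℝ => ‖w t‖ ^ 2) =O[nhdsWithin 0 (Set.Ioi 0)] fun t => t := by
      rw [isBigO_iff]
      refine ⟨2 * ‖b‖ ^ 2 + 4 * d, ?_⟩
      have hmem : Set.Ioo (0:ℝ) 1 ∈ nhdsWithin (0:ℝ) (Set.Ioi 0) :=
        mem_nhdsGT_iff_exists_Ioo_subset.2 ⟨1, by norm_num, fun x hx => hx⟩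
      filter_upwards [hmem] with t ht
      have hb := hnorm t ht.1 ht.2 (w t) (hwc t ht.1 ht.2)
      rw [Real.norm_eq_abs, Real.norm_eq_abs, abs_of_nonneg (by positivity),
        abs_of_pos ht.1]
      exact hb
    exact (h1.trans_isBigO h2).tendsto_div_nhds_zero
  have Tp := key hp hhp0 (fun t _ _ => Or.inl rfl)
  have Tm := key hm hhm0 (fun t _ _ => Or.inr rfl)
  -- the main convergence
  have hid : Tendsto (fun t : ℝ => t) (nhdsWithin 0 (Set.Ioi 0)) (nhds 0) :=
    tendsto_id.mono_left nhdsWithin_le_nhds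
  have main : Tendsto
      (fun t : ℝ => L b + d * B σ σ + (t / 2) * B b b
        + (1/2) * (R (hp t) / t) + (1/2) * (R (hm t) / t))
      (nhdsWithin 0 (Set.Ioi 0))
      (nhds (L b + d * B σ σ + (0 / 2) * B b b + (1/2) * 0 + (1/2) * 0)) := by
    exact ((((tendsto_const_nhds.add ((hid.div_const 2).mul_const _))).add
      (Tp.const_mul _)).add (Tm.const_mul _))
  have main' : Tendsto
      (fun t : ℝ => L b + d * B σ σ + (t / 2) * B b b
        + (1/2) * (R (hp t) / t) + (1/2) * (R (hm t) / t))
      (nhdsWithin 0 (Set.Ioi 0)) (nhds (d * B σ σ + L b)) := by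
    convert main using 2
    ring
  refine main'.congr' ?_
  filter_upwards [self_mem_nhdsWithin] with t ht
  have ht' : (0:ℝ) < t := ht
  have hst : s t * s t = 2 * t * d := Real.mul_self_sqrt (by positivity)
  have e1 : x + t • b + s t • σ = x + hp t := by rw [hhp]; abel
  have e2 : x + t • b - s t • σ = x + hm t := by rw [hhm]; abel
  have u1 : u (x + hp t) = u x + L (hp t) + (1/2) * B (hp t) (hp t) + R (hp t) := by
    simp [hRdef]
  have u2 : u (x + hm t) = u x + L (hm t) + (1/2) * B (hm t) (hm t) + R (hm t) := by
    simp [hRdef]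
  have lp : L (hp t) = t * L b + s t * L σ := by
    simp [hhp, smul_eq_mul]
  have lm : L (hm t) = t * L b - s t * L σ := by
    simp [hhm, smul_eq_mul]
  have bp : B (hp t) (hp t) = t * t * B b b + t * s t * B b σ + s t * t * B σ b
      + s t * s t * B σ σ := by
    simp [hhp, smul_eq_mul]
    ring
  have bm : B (hm t) (hm t) = t * t * B b b - t * s t * B b σ - s t * t * B σ b
      + s t * s t * B σ σ := by
    simp [hhm, smul_eq_mul]
    ring
  rw [e1, e2, u1, u2, lp, lm, bp, bm, hst]
  field_simp
  ring
end

section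
/- Let u : ℝ³ → ℝ be twice continuously differentiable, let x, b ∈ ℝ³, let ν₁, ν₂ ∈ ℝ³ be orthonormal vectors, and let d ≥ 0. Then lim_{Δt → 0⁺} (1/Δt) · [ ¼ Σ_{δ ∈ {±1}²} u( x + Δt b + √(2 Δt d)(δ₁ν₁ + δ₂ν₂) ) − u(x) ] = d · ( ν₁ᵀ D²u(x) ν₁ + ν₂ᵀ D²u(x) ν₂ ) + b · Du(x), i.e. the four-point semi-Lagrangian scheme is consistent with the operator d · tr( (ν₁ν₁ᵀ + ν₂ν₂ᵀ) D²u ) + b·Du. -/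
open Filter Asymptotics Set

lemma taylor2 {E F : Type*} [NormedAddCommGroup E] [NormedSpace ℝ E]
    [NormedAddCommGroup F] [NormedSpace ℝ F] {f : E → F} {x : E}
    (hf : ContDiffAt ℝ 2 f x) :
    (fun h : E => f (x + h) - f x - fderiv ℝ f x h
      - (1/2 : ℝ) • fderiv ℝ (fderiv ℝ f) x h h) =o[nhds 0] fun h => ‖h‖ ^ 2 := by
  set f' := fderiv ℝ f with hf'def
  set f'' := fderiv ℝ (fderiv ℝ f) x with hf''def
  have hsymm : ∀ v w, f'' v w = f'' w v := hf.isSymmSndFDerivAt (by norm_num)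
  have hev : ∀ᶠ y in nhds x, HasFDerivAt f (f' y) y := by
    filter_upwards [hf.eventually (by simp)] with y hy
    exact (hy.differentiableAt (by norm_num)).hasFDerivAt
  have h2 : HasFDerivAt f' f'' x :=
    ((hf.fderiv_right (m := 1) (by norm_num)).differentiableAt (by norm_num)).hasFDerivAt
  rw [isLittleO_iff]
  intro ε hε
  have h2' : (fun y => f' y - f' x - f'' (y - x)) =o[nhds x] fun y => y - x := by
    rw [hasFDerivAt_iff_isLittleO] at h2; exact h2
  have hb := isLittleO_iff.1 h2' hε
  obtain ⟨δ, δpos, hδ⟩ := Metric.eventually_nhds_iff_ball.1 (hev.and hb)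
  filter_upwards [Metric.ball_mem_nhds (0 : E) δpos] with h hh
  rw [mem_ball_iff_norm, sub_zero] at hh
  -- mean value argument on the segment [x, x+h]
  have hsub : segment ℝ x (x + h) ⊆ Metric.ball x δ := by
    apply (convex_ball x δ).segment_subset (Metric.mem_ball_self δpos)
    rw [Metric.mem_ball, dist_eq_norm]
    simpa using hh
  have hyx : ∀ y ∈ segment ℝ x (x + h), ‖y - x‖ ≤ ‖h‖ := by
    intro y hy
    rw [segment_eq_image'] at hy
    obtain ⟨t, ht, rfl⟩ := hy
    simp only [add_sub_cancel_left, norm_smul, Real.norm_eq_abs, abs_of_nonneg ht.1]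
    nlinarith [norm_nonneg h, ht.1, ht.2]
  set F' : E → F := fun y => f y - f' x (y - x) - (1/2 : ℝ) • f'' (y - x) (y - x) with hFdef
  have hder : ∀ y ∈ segment ℝ x (x + h), HasFDerivWithinAt F' (f' y - f' x - f'' (y - x)) (segment ℝ x (x + h)) y := by
    intro y hy
    have hyb := hδ y (hsub hy)
    have A : HasFDerivAt f (f' y) y := hyb.1
    have B : HasFDerivAt (fun z => f' x (z - x)) (f' x) y := by
      have := ((f' x).hasFDerivAt (x := y)).sub_const (f' x x)
      simpa [map_sub] using this
    have Cc : HasFDerivAt (fun z : E => f'' (z - x)) f'' y := by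
      have := (f''.hasFDerivAt (x := y)).sub_const (f'' x)
      simpa [map_sub] using this
    have Cu : HasFDerivAt (fun z : E => z - x) (ContinuousLinearMap.id ℝ E) y :=
      (hasFDerivAt_id y).sub_const x
    have C : HasFDerivAt (fun z : E => f'' (z - x) (z - x))
        ((f'' (y - x)).comp (ContinuousLinearMap.id ℝ E) + f''.flip (y - x)) y :=
      Cc.clm_apply Cu
    have := (A.sub B).sub (C.const_smul (1/2 : ℝ))
    refine (this.congr_fderiv ?_).hasFDerivWithinAt
    ext k
    simp only [ContinuousLinearMap.coe_sub', Pi.sub_apply, ContinuousLinearMap.coe_smul',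
      Pi.smul_apply, ContinuousLinearMap.add_apply, ContinuousLinearMap.coe_comp',
      Function.comp_apply, ContinuousLinearMap.coe_id', id_eq,
      ContinuousLinearMap.flip_apply]
    rw [hsymm k (y - x)]
    module
  have hbound : ∀ y ∈ segment ℝ x (x + h), ‖f' y - f' x - f'' (y - x)‖ ≤ ε * ‖h‖ := by
    intro y hy
    have := (hδ y (hsub hy)).2
    calc ‖f' y - f' x - f'' (y - x)‖ ≤ ε * ‖y - x‖ := this
      _ ≤ ε * ‖h‖ := mul_le_mul_of_nonneg_left (hyx y hy) hε.le
  have hmv := Convex.norm_image_sub_le_of_norm_hasFDerivWithin_le hder hbound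
    (convex_segment _ _) (left_mem_segment ℝ x (x + h)) (right_mem_segment ℝ x (x + h))
  have hFx : F' x = f x := by simp [hFdef]
  have hFxh : F' (x + h) = f (x + h) - f' x h - (1/2 : ℝ) • f'' h h := by
    simp only [hFdef, add_sub_cancel_left]
  rw [hFx, hFxh] at hmv
  simp only [add_sub_cancel_left] at hmv
  calc ‖f (x + h) - f x - f' x h - (1/2 : ℝ) • f'' h h‖
      = ‖f (x + h) - f' x h - (1/2 : ℝ) • f'' h h - f x‖ := by congr 1; abel
    _ ≤ ε * ‖h‖ * ‖h‖ := hmv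
    _ = ε * ‖‖h‖ ^ 2‖ := by rw [Real.norm_of_nonneg (by positivity)]; ring


lemma curve_aux {E : Type*} [NormedAddCommGroup E] [NormedSpace ℝ E]
    (R : E → ℝ) (hR : R =o[nhds 0] fun h : E => ‖h‖ ^ 2)
    (b v : E) (hv : ‖v‖ ≤ 2) (d : ℝ) (hd : 0 ≤ d) :
    Filter.Tendsto (fun t : ℝ => R (t • b + Real.sqrt (2 * t * d) • v) / t)
      (nhdsWithin 0 (Set.Ioi 0)) (nhds 0) := by
  set c : ℝ → E := fun t => t • b + Real.sqrt (2 * t * d) • v with hcdef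
  have hcont : Continuous c := by
    apply Continuous.add
    · exact continuous_id.smul continuous_const
    · exact (Real.continuous_sqrt.comp
        ((continuous_const.mul continuous_id).mul continuous_const)).smul continuous_const
  have hc0 : Filter.Tendsto c (nhdsWithin 0 (Set.Ioi 0)) (nhds 0) := by
    have h0 : c 0 = 0 := by simp [hcdef]
    simpa [h0] using (hcont.tendsto 0).mono_left nhdsWithin_le_nhds
  have hO : (fun t : ℝ => ‖c t‖ ^ 2) =O[nhdsWithin 0 (Set.Ioi 0)] (fun t : ℝ => t) := by
    rw [Asymptotics.isBigO_iff]
    refine ⟨2 * ‖b‖ ^ 2 + 16 * d, ?_⟩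
    filter_upwards [Ioo_mem_nhdsGT_of_mem (Set.mem_Ico.2 ⟨le_refl 0, zero_lt_one⟩)]
      with t ht
    obtain ⟨ht0, ht1⟩ := ht
    have hs0 : 0 ≤ Real.sqrt (2 * t * d) := Real.sqrt_nonneg _
    have hs2 : Real.sqrt (2 * t * d) ^ 2 = 2 * t * d := Real.sq_sqrt (by positivity)
    have h1 : ‖c t‖ ≤ t * ‖b‖ + Real.sqrt (2 * t * d) * 2 := by
      refine (norm_add_le _ _).trans ?_
      rw [norm_smul, norm_smul, Real.norm_eq_abs, Real.norm_eq_abs,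
        abs_of_nonneg ht0.le, abs_of_nonneg hs0]
      gcongr
    rw [Real.norm_eq_abs, Real.norm_eq_abs, abs_of_nonneg (by positivity),
      abs_of_nonneg ht0.le]
    have htt : t ^ 2 ≤ t := by nlinarith
    have h4 : (Real.sqrt (2 * t * d) * 2) ^ 2 = 4 * (2 * t * d) := by
      rw [mul_pow, hs2]; ring
    calc ‖c t‖ ^ 2 ≤ (t * ‖b‖ + Real.sqrt (2 * t * d) * 2) ^ 2 :=
          pow_le_pow_left₀ (norm_nonneg _) h1 2
      _ ≤ 2 * (t * ‖b‖) ^ 2 + 2 * (Real.sqrt (2 * t * d) * 2) ^ 2 := by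
          nlinarith [sq_nonneg (t * ‖b‖ - Real.sqrt (2 * t * d) * 2)]
      _ = 2 * t ^ 2 * ‖b‖ ^ 2 + 16 * t * d := by rw [h4]; ring
      _ ≤ (2 * ‖b‖ ^ 2 + 16 * d) * t := by nlinarith [sq_nonneg ‖b‖, htt]
  have hRo : (fun t : ℝ => R (c t)) =o[nhdsWithin 0 (Set.Ioi 0)] (fun t : ℝ => t) :=
    (hR.comp_tendsto hc0).trans_isBigO hO
  exact hRo.tendsto_div_nhds_zero

set_option maxHeartbeats 1000000 in
lemma main_aux {E : Type*} [NormedAddCommGroup E] [NormedSpace ℝ E]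
    (u : E → ℝ) (x b ν₁ ν₂ : E) (hν₁ : ‖ν₁‖ = 1) (hν₂ : ‖ν₂‖ = 1)
    (d : ℝ) (hd : 0 ≤ d)
    (f' : E →L[ℝ] ℝ) (H : E →L[ℝ] E →L[ℝ] ℝ) (R : E → ℝ)
    (hR : R =o[nhds 0] fun h : E => ‖h‖ ^ 2)
    (hu_eq : ∀ h : E, u (x + h) = u x + f' h + (1/2 : ℝ) * H h h + R h) :
    Filter.Tendsto
      (fun t : ℝ => (1 / t) *
        ((1 / 4) *
          (u (x + t • b + Real.sqrt (2 * t * d) • (ν₁ + ν₂)) +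
           u (x + t • b + Real.sqrt (2 * t * d) • (ν₁ - ν₂)) +
           u (x + t • b + Real.sqrt (2 * t * d) • (-ν₁ + ν₂)) +
           u (x + t • b + Real.sqrt (2 * t * d) • (-ν₁ - ν₂)))
          - u x))
      (nhdsWithin 0 (Set.Ioi 0))
      (nhds (d * (H ν₁ ν₁ + H ν₂ ν₂) + f' b)) := by
  have T1 := curve_aux R hR b (ν₁ + ν₂) (by
    calc ‖ν₁ + ν₂‖ ≤ ‖ν₁‖ + ‖ν₂‖ := norm_add_le _ _
      _ ≤ 2 := by rw [hν₁, hν₂]; norm_num) d hd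
  have T2 := curve_aux R hR b (ν₁ - ν₂) (by
    calc ‖ν₁ - ν₂‖ ≤ ‖ν₁‖ + ‖ν₂‖ := norm_sub_le _ _
      _ ≤ 2 := by rw [hν₁, hν₂]; norm_num) d hd
  have T3 := curve_aux R hR b (-ν₁ + ν₂) (by
    calc ‖-ν₁ + ν₂‖ ≤ ‖-ν₁‖ + ‖ν₂‖ := norm_add_le _ _
      _ ≤ 2 := by rw [norm_neg, hν₁, hν₂]; norm_num) d hd
  have T4 := curve_aux R hR b (-ν₁ - ν₂) (by
    calc ‖-ν₁ - ν₂‖ ≤ ‖-ν₁‖ + ‖ν₂‖ := norm_sub_le _ _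
      _ ≤ 2 := by rw [norm_neg, hν₁, hν₂]; norm_num) d hd
  have Thalf : Filter.Tendsto (fun t : ℝ => (t / 2) * H b b)
      (nhdsWithin 0 (Set.Ioi 0)) (nhds 0) := by
    have : Continuous (fun t : ℝ => (t / 2) * H b b) := by continuity
    have h0 := this.tendsto 0
    simp only [zero_div, zero_mul] at h0
    exact h0.mono_left nhdsWithin_le_nhds
  have Tlim : Filter.Tendsto
      (fun t : ℝ => (d * (H ν₁ ν₁ + H ν₂ ν₂) + f' b) + ((t / 2) * H b b
        + (1 / 4) * (R (t • b + Real.sqrt (2 * t * d) • (ν₁ + ν₂)) / t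
          + R (t • b + Real.sqrt (2 * t * d) • (ν₁ - ν₂)) / t
          + R (t • b + Real.sqrt (2 * t * d) • (-ν₁ + ν₂)) / t
          + R (t • b + Real.sqrt (2 * t * d) • (-ν₁ - ν₂)) / t)))
      (nhdsWithin 0 (Set.Ioi 0))
      (nhds ((d * (H ν₁ ν₁ + H ν₂ ν₂) + f' b) + (0 + (1 / 4) * (0 + 0 + 0 + 0)))) :=
    tendsto_const_nhds.add (Thalf.add ((((T1.add T2).add T3).add T4).const_mul (1/4 : ℝ)))
  have Tlim' := Tlim
  rw [show ((d * (H ν₁ ν₁ + H ν₂ ν₂) + f' b) + (0 + (1 / 4) * (0 + 0 + 0 + 0)))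
      = d * (H ν₁ ν₁ + H ν₂ ν₂) + f' b by ring] at Tlim'
  refine Tlim'.congr' ?_
  filter_upwards [self_mem_nhdsWithin] with t ht
  have ht0 : (0 : ℝ) < t := ht
  have hq2 : Real.sqrt (2 * t * d) ^ 2 = 2 * t * d := Real.sq_sqrt (by positivity)
  have hassoc : ∀ w : E, x + t • b + Real.sqrt (2 * t * d) • w
      = x + (t • b + Real.sqrt (2 * t * d) • w) := fun w => add_assoc _ _ _
  rw [hassoc, hassoc, hassoc, hassoc, hu_eq, hu_eq, hu_eq, hu_eq]
  generalize Real.sqrt (2 * t * d) = q at hq2 ⊢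
  simp only [map_add, map_sub, map_neg, map_smul, ContinuousLinearMap.add_apply,
    ContinuousLinearMap.sub_apply, ContinuousLinearMap.neg_apply,
    ContinuousLinearMap.smul_apply, ContinuousLinearMap.coe_smul', Pi.smul_apply,
    ContinuousLinearMap.coe_add', ContinuousLinearMap.coe_sub', Pi.add_apply, Pi.sub_apply,
    Pi.neg_apply, smul_eq_mul]
  field_simp
  linear_combination (-4) * (H ν₁ ν₁ + H ν₂ ν₂) * hq2



/-- Consistency of the four-point 3D semi-Lagrangian scheme: for `u` twice
continuously differentiable and orthonormal `ν₁, ν₂`, as `Δt → 0⁺`,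
`(1/Δt)[¼ Σ_{δ∈{±1}²} u(x+Δt b+√(2Δt d)(δ₁ν₁+δ₂ν₂)) - u(x)]
  → d(ν₁ᵀD²u(x)ν₁ + ν₂ᵀD²u(x)ν₂) + b·Du(x)`. -/
theorem stmt_12 (u : EuclideanSpace ℝ (Fin 3) → ℝ)
    (hu : ContDiff ℝ 2 u)
    (x b : EuclideanSpace ℝ (Fin 3))
    (ν₁ ν₂ : EuclideanSpace ℝ (Fin 3))
    (hν₁ : ‖ν₁‖ = 1) (hν₂ : ‖ν₂‖ = 1) (hortho : inner ℝ ν₁ ν₂ = (0 : ℝ))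
    (d : ℝ) (hd : 0 ≤ d) :
    Filter.Tendsto
      (fun Δt : ℝ => (1 / Δt) *
        ((1 / 4) *
          (u (x + Δt • b + Real.sqrt (2 * Δt * d) • (ν₁ + ν₂)) +
           u (x + Δt • b + Real.sqrt (2 * Δt * d) • (ν₁ - ν₂)) +
           u (x + Δt • b + Real.sqrt (2 * Δt * d) • (-ν₁ + ν₂)) +
           u (x + Δt • b + Real.sqrt (2 * Δt * d) • (-ν₁ - ν₂)))
          - u x))
      (nhdsWithin 0 (Set.Ioi 0))
      (nhds (d * (fderiv ℝ (fun y => fderiv ℝ u y ν₁) x ν₁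
                  + fderiv ℝ (fun y => fderiv ℝ u y ν₂) x ν₂)
             + inner ℝ b (gradient u x))) := by
  have hH2 : HasFDerivAt (fderiv ℝ u) (fderiv ℝ (fderiv ℝ u) x) x :=
    (((hu.contDiffAt).fderiv_right (m := 1) (by norm_num)).differentiableAt
      (by norm_num)).hasFDerivAt
  have hkey : ∀ ν : EuclideanSpace ℝ (Fin 3),
      fderiv ℝ (fun y => fderiv ℝ u y ν) x ν = fderiv ℝ (fderiv ℝ u) x ν ν := by
    intro ν
    have h1 : HasFDerivAt (fun y => fderiv ℝ u y ν)
        ((fderiv ℝ (fderiv ℝ u) x).flip ν) x := by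
      have := hH2.clm_apply (hasFDerivAt_const ν x)
      simpa using this
    rw [h1.fderiv]
    simp
  have hgrad : inner ℝ b (gradient u x) = fderiv ℝ u x b := by
    rw [real_inner_comm]
    exact InnerProductSpace.toDual_symm_apply
  have hR : (fun h => u (x + h) - u x - fderiv ℝ u x h
      - (1/2 : ℝ) * fderiv ℝ (fderiv ℝ u) x h h) =o[nhds 0]
      fun h : EuclideanSpace ℝ (Fin 3) => ‖h‖ ^ 2 := by
    have := taylor2 (hu.contDiffAt (x := x))
    simpa [smul_eq_mul] using this
  have hu_eq : ∀ h : EuclideanSpace ℝ (Fin 3),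
      u (x + h) = u x + fderiv ℝ u x h + (1/2 : ℝ) * fderiv ℝ (fderiv ℝ u) x h h
        + (u (x + h) - u x - fderiv ℝ u x h
            - (1/2 : ℝ) * fderiv ℝ (fderiv ℝ u) x h h) := by
    intro h; ring
  rw [hkey ν₁, hkey ν₂, hgrad]
  exact main_aux u x b ν₁ ν₂ hν₁ hν₂ d hd (fderiv ℝ u x) (fderiv ℝ (fderiv ℝ u) x)
    _ hR hu_eq
end
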